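/- Let p be a probability distribution on a finite set U with p(u) > 0 for all u, and for each u ∈ U let ρ_u be a d×d density matrix all of whose eigenvalues are strictly positive. Let δ > 0 and n ≥ 1. Then there is a constant c > 0, depending only on the ensemble {p_u, ρ_u} and not on n or δ, such that for every word u₁ⁿ ∈ T^n_{p,δ}, the conditionally typical projector Π^n_{ρ_u,δ}(u₁ⁿ) = ⊗_{u∈U} Π^{I_u}_{ρ_u,δ} satisfies tr(Π^n_{ρ_u,δ}(u₁ⁿ)) ≤ 2^{n(∑_{u∈U} p(u) S(ρ_u) + cδ)}. -/

import Mathlib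

open scoped Classical ComplexOrder Matrix

/-- Von Neumann entropy (base 2) of a matrix: `-∑ λᵢ log₂ λᵢ` over its eigenvalues
(defined to be `0` if the matrix is not Hermitian). -/
noncomputable def vnEntropy {m : Type*} [Fintype m] [DecidableEq m]
    (ρ : Matrix m m ℂ) : ℝ :=
  if h : ρ.IsHermitian then -∑ i, h.eigenvalues i * Real.logb 2 (h.eigenvalues i) else 0

/-- The typical set `T^n_{p,δ}`: words `w` of length `n` such that for every letter `x`,
`|N(x|w) − n p(x)| ≤ n δ`, where `N(x|w)` counts the occurrences of `x` in `w`. -/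
noncomputable def typicalSet {X : Type*} [Fintype X] [DecidableEq X]
    (p : X → ℝ) (n : ℕ) (δ : ℝ) : Finset (Fin n → X) :=
  Finset.univ.filter fun w => ∀ x : X,
    |((Finset.univ.filter fun i => w i = x).card : ℝ) - n * p x| ≤ n * δ

/-- The family `e` is an orthonormal system of vectors. -/
def OrthonormalFamily {X : Type*} [Fintype X] [DecidableEq X] (e : X → X → ℂ) : Prop :=
  ∀ k l, (∑ a, (starRingEnd ℂ) (e k a) * e l a) = if k = l then 1 else 0

/-- The conditionally typical projector `Π^n_{ρ_u,δ}(u₁ⁿ) = ⊗_{u∈U} Π^{I_u}_{ρ_u,δ}`: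
the sum of the rank-one projectors onto `⊗ᵢ e_{u_i, k_i}` over those eigenvalue-index
words `k` which, within each fibre `I_u = {i : u_i = u}`, are typical for the eigenvalue
distribution `lam u` of `ρ_u`. -/
noncomputable def condTypicalProj {U : Type*} [Fintype U] [DecidableEq U] {d : ℕ}
    (e : U → Fin d → Fin d → ℂ) (lam : U → Fin d → ℝ) (δ : ℝ)
    {n : ℕ} (w : Fin n → U) :
    Matrix (Fin n → Fin d) (Fin n → Fin d) ℂ :=
  ∑ k ∈ Finset.univ.filter (fun k : Fin n → Fin d => ∀ (u : U) (x : Fin d),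
      |((Finset.univ.filter fun i => w i = u ∧ k i = x).card : ℝ) -
          ((Finset.univ.filter fun i => w i = u).card : ℝ) * lam u x| ≤
        ((Finset.univ.filter fun i => w i = u).card : ℝ) * δ),
    Matrix.of fun a b =>
      (∏ i, e (w i) (k i) (a i)) * ∏ i, (starRingEnd ℂ) (e (w i) (k i) (b i))

open Polynomial in
lemma charpoly_conj_aux {d : ℕ} (P M Q : Matrix (Fin d) (Fin d) ℂ)
    (h1 : P * Q = 1) : (P * M * Q).charpoly = M.charpoly := by
  let f : Matrix (Fin d) (Fin d) ℂ →+* Matrix (Fin d) (Fin d) ℂ[X] :=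
    (Polynomial.C : ℂ →+* ℂ[X]).mapMatrix
  have hfPQ : f P * f Q = 1 := by rw [← map_mul, h1, map_one]
  have hcomm : ∀ A : Matrix (Fin d) (Fin d) ℂ[X],
      Matrix.scalar (Fin d) (X : ℂ[X]) * A = A * Matrix.scalar (Fin d) (X : ℂ[X]) :=
    fun A => Matrix.scalar_commute (X : ℂ[X]) (fun r => Commute.all _ r) A
  have key : Matrix.charmatrix (P * M * Q) = f P * Matrix.charmatrix M * f Q := by
    show _ = f P * (Matrix.scalar (Fin d) (X : ℂ[X]) - f M) * f Q
    rw [Matrix.charmatrix, mul_sub, sub_mul, map_mul, map_mul]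
    congr 1
    rw [← hcomm (f P), mul_assoc, hfPQ, mul_one]
  rw [Matrix.charpoly, key, Matrix.det_mul, Matrix.det_mul, mul_comm (Matrix.det (f P)),
    mul_assoc, ← Matrix.det_mul, hfPQ, Matrix.det_one, mul_one, Matrix.charpoly]

open Polynomial in
lemma charpoly_diag {d : ℕ} (v : Fin d → ℂ) :
    (Matrix.diagonal v).charpoly = ∏ i, (X - C (v i)) := by
  have h : Matrix.charmatrix (Matrix.diagonal v) = Matrix.diagonal (fun i => X - C (v i)) := by
    ext i j
    by_cases h : i = j
    · subst h; simp [Matrix.charmatrix_apply_eq]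
    · simp [Matrix.charmatrix_apply_ne _ _ _ h, Matrix.diagonal_apply_ne _ h]
  rw [Matrix.charpoly, h, Matrix.det_diagonal]

open Polynomial in
lemma eig_sum_of_conj_diag {d : ℕ} {A : Matrix (Fin d) (Fin d) ℂ} (hA : A.IsHermitian)
    (P : Matrix (Fin d) (Fin d) ℂ) (hP : Pᴴ * P = 1) (lam : Fin d → ℝ)
    (hAP : A = P * Matrix.diagonal (fun k => (lam k : ℂ)) * Pᴴ) (g : ℝ → ℝ) :
    ∑ i, g (hA.eigenvalues i) = ∑ k, g (lam k) := by
  have hPP : P * Pᴴ = 1 := mul_eq_one_comm.mp hP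
  have h1 : A.charpoly = ∏ k, (X - C ((lam k : ℂ))) := by
    rw [hAP, charpoly_conj_aux _ _ _ hPP, charpoly_diag]
  have hU : (hA.eigenvectorUnitary : Matrix (Fin d) (Fin d) ℂ) *
      star (hA.eigenvectorUnitary : Matrix (Fin d) (Fin d) ℂ) = 1 :=
    Matrix.mem_unitaryGroup_iff.mp hA.eigenvectorUnitary.2
  have h2 : A.charpoly = ∏ i, (X - C ((hA.eigenvalues i : ℂ))) := by
    conv_lhs => rw [hA.spectral_theorem]
    rw [Unitary.conjStarAlgAut_apply, charpoly_conj_aux _ _ _ hU]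
    exact charpoly_diag _
  have hm : ∀ (v : Fin d → ℝ),
      (∏ k, (X - C ((v k : ℂ)))).roots = Finset.univ.val.map (fun k => ((v k : ℂ))) := by
    intro v
    rw [Finset.prod_eq_multiset_prod,
      show Multiset.map (fun k => X - C ((v k : ℂ))) Finset.univ.val
        = Multiset.map (fun a : ℂ => X - C a) (Multiset.map (fun k => ((v k : ℂ))) Finset.univ.val)
        by rw [Multiset.map_map]; rfl,
      Polynomial.roots_multiset_prod_X_sub_C]
  have hms : Finset.univ.val.map (fun k => ((lam k : ℂ)))
      = Finset.univ.val.map (fun i => ((hA.eigenvalues i : ℂ))) := by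
    rw [← hm lam, ← hm hA.eigenvalues, ← h1, ← h2]
  have hreal : Finset.univ.val.map lam = Finset.univ.val.map hA.eigenvalues := by
    apply Multiset.map_injective (f := (fun x : ℝ => (x : ℂ))) Complex.ofReal_injective
    rwa [Multiset.map_map, Multiset.map_map]
  calc ∑ i, g (hA.eigenvalues i) = ((Finset.univ.val.map hA.eigenvalues).map g).sum := by
        rw [Multiset.map_map]; rfl
    _ = ((Finset.univ.val.map lam).map g).sum := by rw [hreal]
    _ = ∑ k, g (lam k) := by rw [Multiset.map_map]; rfl


/-- For an ensemble `{p_u, ρ_u}` with strictly positive probabilities and strictly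
positive eigenvalues, there is a constant `c > 0` depending only on the ensemble such
that for every `δ > 0`, `n ≥ 1` and every typical word `u₁ⁿ ∈ T^n_{p,δ}`, the
conditionally typical projector satisfies
`tr(Π^n_{ρ_u,δ}(u₁ⁿ)) ≤ 2^{n(∑_u p(u) S(ρ_u) + cδ)}`. -/
theorem stmt_10 {U : Type*} [Fintype U] [DecidableEq U] {d : ℕ}
    (p : U → ℝ) (hp0 : ∀ u, 0 < p u) (hp1 : ∑ u, p u = 1)
    (ρ : U → Matrix (Fin d) (Fin d) ℂ)
    (e : U → Fin d → Fin d → ℂ) (lam : U → Fin d → ℝ)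
    (he : ∀ u, OrthonormalFamily (e u)) (hlam : ∀ u k, 0 < lam u k)
    (hρ : ∀ u, ρ u = ∑ k, (lam u k : ℂ) • Matrix.vecMulVec (e u k) (star (e u k)))
    (hρtr : ∀ u, (ρ u).trace = 1) :
    ∃ c > (0 : ℝ), ∀ δ > (0 : ℝ), ∀ n : ℕ, 1 ≤ n → ∀ w ∈ typicalSet p n δ,
      ((condTypicalProj e lam δ w).trace).re ≤
        (2 : ℝ) ^ ((n : ℝ) * ((∑ u, p u * vnEntropy (ρ u)) + c * δ)) := by
  classical
  set H : U → ℝ := fun u => -∑ x, lam u x * Real.logb 2 (lam u x) with hHdef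
  set Cc : U → ℝ := fun u => -∑ x, Real.logb 2 (lam u x) with hCdef
  have horth : ∀ u (k : Fin d), ∑ a, e u k a * (starRingEnd ℂ) (e u k a) = 1 := by
    intro u k
    have h : (∑ a, (starRingEnd ℂ) (e u k a) * e u k a) = 1 := by simpa using he u k k
    rw [← h]
    exact Finset.sum_congr rfl fun a _ => mul_comm _ _
  -- sum of eigenvalues is 1
  have hsum1 : ∀ u, ∑ x, lam u x = 1 := by
    intro u
    have h := hρtr u
    rw [hρ u] at h
    have htv : ∀ k, (Matrix.vecMulVec (e u k) (star (e u k))).trace = 1 := by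
      intro k
      simp only [Matrix.trace, Matrix.diag_apply, Matrix.vecMulVec_apply, Pi.star_apply,
        Complex.star_def]
      exact horth u k
    rw [Matrix.trace_sum] at h
    simp only [Matrix.trace_smul, htv, smul_eq_mul, mul_one] at h
    have : ((∑ x, lam u x : ℝ) : ℂ) = 1 := by push_cast; exact h
    exact_mod_cast this
  have hlamle1 : ∀ u x, lam u x ≤ 1 := fun u x => by
    rw [← hsum1 u]
    exact Finset.single_le_sum (fun y _ => (hlam u y).le) (Finset.mem_univ x)
  have hlogle : ∀ u x, Real.logb 2 (lam u x) ≤ 0 := fun u x =>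
    Real.logb_nonpos (by norm_num) (hlam u x).le (hlamle1 u x)
  have hHnn : ∀ u, 0 ≤ H u := fun u => by
    rw [hHdef, neg_nonneg]
    exact Finset.sum_nonpos fun x _ => mul_nonpos_of_nonneg_of_nonpos (hlam u x).le (hlogle u x)
  have hCnn : ∀ u, 0 ≤ Cc u := fun u => by
    rw [hCdef, neg_nonneg]
    exact Finset.sum_nonpos fun x _ => hlogle u x
  -- von Neumann entropy identification
  have hvn : ∀ u, vnEntropy (ρ u) = H u := by
    intro u
    set P : Matrix (Fin d) (Fin d) ℂ := Matrix.of (fun a k => e u k a) with hPdef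
    have hPo : Pᴴ * P = 1 := by
      ext k l
      simpa [hPdef, Matrix.mul_apply, Matrix.conjTranspose_apply, Matrix.one_apply] using he u k l
    have hdec : ρ u = P * Matrix.diagonal (fun k => ((lam u k : ℂ))) * Pᴴ := by
      ext a b
      simp only [hρ, Matrix.sum_apply, Matrix.smul_apply, Matrix.vecMulVec_apply,
        Matrix.mul_apply, Matrix.diagonal_apply, Matrix.conjTranspose_apply, Matrix.of_apply,
        Pi.star_apply, smul_eq_mul, Finset.mul_sum, Finset.sum_ite_eq, Finset.mem_univ, if_true,
        hPdef]
      refine Finset.sum_congr rfl fun x _ => ?_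
      rw [Finset.sum_eq_single x (by intro b _ hb; simp [hb]) (by simp)]
      split_ifs with hcond
      · ring
      · exact absurd rfl hcond
    have hherm : (ρ u).IsHermitian := by
      rw [hdec]
      have hd : (Matrix.diagonal (fun k => ((lam u k : ℂ))))ᴴ
          = Matrix.diagonal (fun k => ((lam u k : ℂ))) := by
        ext i j
        by_cases hij : i = j
        · subst hij; simp [Matrix.conjTranspose_apply, Complex.conj_ofReal]
        · simp [Matrix.conjTranspose_apply, Matrix.diagonal_apply_ne, hij, Ne.symm hij]
      show _ = _
      rw [Matrix.conjTranspose_mul, Matrix.conjTranspose_mul, Matrix.conjTranspose_conjTranspose,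
        hd, mul_assoc]
    rw [vnEntropy, dif_pos hherm, hHdef]
    exact congrArg Neg.neg
      (eig_sum_of_conj_diag hherm P hPo (lam u) hdec (fun t => t * Real.logb 2 t))
  refine ⟨1 + ∑ u, (H u + Cc u), by
    have := Finset.sum_nonneg (fun u (_ : u ∈ Finset.univ) => add_nonneg (hHnn u) (hCnn u))
    linarith, ?_⟩
  intro δ hδ n hn w hw
  set c : ℝ := 1 + ∑ u, (H u + Cc u) with hcdef
  simp only [hvn]
  set B : ℝ := (n : ℝ) * ((∑ u, p u * H u) + c * δ) with hBdef
  set S : Finset (Fin n → Fin d) :=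
    Finset.univ.filter (fun k : Fin n → Fin d => ∀ (u : U) (x : Fin d),
      |((Finset.univ.filter fun i => w i = u ∧ k i = x).card : ℝ) -
          ((Finset.univ.filter fun i => w i = u).card : ℝ) * lam u x| ≤
        ((Finset.univ.filter fun i => w i = u).card : ℝ) * δ) with hSdef
  -- trace is the cardinality
  have htr : (condTypicalProj e lam δ w).trace = ((S.card : ℝ) : ℂ) := by
    rw [condTypicalProj, ← hSdef, Matrix.trace_sum]
    have h1 : ∀ k : Fin n → Fin d, (Matrix.of fun (a b : Fin n → Fin d) =>
        (∏ i, e (w i) (k i) (a i)) * ∏ i, (starRingEnd ℂ) (e (w i) (k i) (b i))).trace = 1 := by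
      intro k
      simp only [Matrix.trace, Matrix.diag_apply, Matrix.of_apply]
      calc ∑ a : Fin n → Fin d,
            (∏ i, e (w i) (k i) (a i)) * ∏ i, (starRingEnd ℂ) (e (w i) (k i) (a i))
          = ∑ a : Fin n → Fin d,
            ∏ i, (e (w i) (k i) (a i) * (starRingEnd ℂ) (e (w i) (k i) (a i))) :=
            Finset.sum_congr rfl fun a _ => (Finset.prod_mul_distrib).symm
        _ = ∏ i, ∑ x, (e (w i) (k i) x * (starRingEnd ℂ) (e (w i) (k i) x)) :=
            (Fintype.prod_sum (fun i x => e (w i) (k i) x * (starRingEnd ℂ) (e (w i) (k i) x))).symm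
        _ = 1 := by simp [horth]
    rw [Finset.sum_congr rfl fun k _ => h1 k, Finset.sum_const, nsmul_eq_mul, mul_one]
    norm_cast
  -- typicality of w
  have hwt : ∀ u : U, |((Finset.univ.filter fun i => w i = u).card : ℝ) - n * p u| ≤ n * δ := by
    have := hw
    rw [typicalSet, Finset.mem_filter] at this
    exact this.2
  have hm_le : ∀ u, ((Finset.univ.filter fun i => w i = u).card : ℝ) ≤ n * p u + n * δ := by
    intro u
    have := (abs_le.mp (hwt u)).2
    linarith
  have hm_le_n : ∀ u, ((Finset.univ.filter fun i => w i = u).card : ℝ) ≤ n := by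
    intro u
    have := Finset.card_filter_le (Finset.univ : Finset (Fin n)) (fun i => w i = u)
    calc ((Finset.univ.filter fun i => w i = u).card : ℝ) ≤ (Finset.univ : Finset (Fin n)).card := by
          exact_mod_cast this
      _ = n := by simp
  -- key pointwise bound
  have key : ∀ k ∈ S, (2 : ℝ) ^ (-B) ≤ ∏ i, lam (w i) (k i) := by
    intro k hk
    have hqpos : 0 < ∏ i, lam (w i) (k i) := Finset.prod_pos fun i _ => hlam _ _
    have hkS := (Finset.mem_filter.mp hk).2
    have hlog : -B ≤ Real.logb 2 (∏ i, lam (w i) (k i)) := by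
      rw [Real.logb_prod _ _ (fun i _ => (hlam _ _).ne')]
      -- fiberwise decomposition
      have hfib : ∑ i, Real.logb 2 (lam (w i) (k i))
          = ∑ u, ∑ x, ((Finset.univ.filter fun i => w i = u ∧ k i = x).card : ℝ) *
              Real.logb 2 (lam u x) := by
        have hstep : ∀ i : Fin n, Real.logb 2 (lam (w i) (k i))
            = ∑ u, ∑ x, (if w i = u ∧ k i = x then Real.logb 2 (lam u x) else 0) := by
          intro i
          simp [ite_and, Finset.sum_ite_eq]
        rw [Finset.sum_congr rfl fun i _ => hstep i, Finset.sum_comm]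
        refine Finset.sum_congr rfl fun u _ => ?_
        rw [Finset.sum_comm]
        refine Finset.sum_congr rfl fun x _ => ?_
        rw [← Finset.sum_filter, Finset.sum_const, nsmul_eq_mul]
      rw [hfib]
      -- lower bound each fibre
      have hbound : ∀ u, -((((Finset.univ.filter fun i => w i = u).card : ℝ)) * H u)
            - δ * (((Finset.univ.filter fun i => w i = u).card : ℝ)) * Cc u
          ≤ ∑ x, ((Finset.univ.filter fun i => w i = u ∧ k i = x).card : ℝ) *
              Real.logb 2 (lam u x) := by
        intro u
        set m : ℝ := ((Finset.univ.filter fun i => w i = u).card : ℝ) with hmdef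
        have hmnn : 0 ≤ m := Nat.cast_nonneg _
        have h1 : ∀ x, (m * lam u x + m * δ) * Real.logb 2 (lam u x)
            ≤ ((Finset.univ.filter fun i => w i = u ∧ k i = x).card : ℝ) *
              Real.logb 2 (lam u x) := by
          intro x
          apply mul_le_mul_of_nonpos_right _ (hlogle u x)
          have := (abs_le.mp (hkS u x)).2
          linarith
        calc -(m * H u) - δ * m * Cc u
            = ∑ x, (m * lam u x + m * δ) * Real.logb 2 (lam u x) := by
              rw [Finset.sum_congr rfl (fun x (_ : x ∈ Finset.univ) =>
                show (m * lam u x + m * δ) * Real.logb 2 (lam u x)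
                  = m * (lam u x * Real.logb 2 (lam u x)) + m * δ * Real.logb 2 (lam u x)
                  from by ring),
                Finset.sum_add_distrib, ← Finset.mul_sum, ← Finset.mul_sum]
              simp only [hHdef, hCdef]
              ring
          _ ≤ _ := Finset.sum_le_sum fun x _ => h1 x
      have hglobal : -B ≤ ∑ u, (-((((Finset.univ.filter fun i => w i = u).card : ℝ)) * H u)
            - δ * (((Finset.univ.filter fun i => w i = u).card : ℝ)) * Cc u) := by
        rw [neg_le, ← Finset.sum_neg_distrib]
        have : ∀ u, -(-((((Finset.univ.filter fun i => w i = u).card : ℝ)) * H u)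
              - δ * (((Finset.univ.filter fun i => w i = u).card : ℝ)) * Cc u)
            ≤ (n * p u + n * δ) * H u + δ * n * Cc u := by
          intro u
          have h1 : (((Finset.univ.filter fun i => w i = u).card : ℝ)) * H u
              ≤ (n * p u + n * δ) * H u :=
            mul_le_mul_of_nonneg_right (hm_le u) (hHnn u)
          have h2 : δ * (((Finset.univ.filter fun i => w i = u).card : ℝ)) * Cc u
              ≤ δ * n * Cc u := by
            apply mul_le_mul_of_nonneg_right _ (hCnn u)
            exact mul_le_mul_of_nonneg_left (hm_le_n u) hδ.le
          linarith
        calc ∑ u, -(-((((Finset.univ.filter fun i => w i = u).card : ℝ)) * H u)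
              - δ * (((Finset.univ.filter fun i => w i = u).card : ℝ)) * Cc u)
            ≤ ∑ u, ((n * p u + n * δ) * H u + δ * n * Cc u) :=
              Finset.sum_le_sum fun u _ => this u
          _ ≤ B := by
              rw [hBdef, hcdef]
              have hnd : 0 ≤ (n : ℝ) * δ := by positivity
              have hsum : ∑ u, ((n * p u + n * δ) * H u + δ * n * Cc u)
                  = n * (∑ u, p u * H u) + (n * δ) * (∑ u, (H u + Cc u)) := by
                rw [Finset.mul_sum, Finset.mul_sum, ← Finset.sum_add_distrib]
                refine Finset.sum_congr rfl fun u _ => by ring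
              rw [hsum]
              nlinarith [Finset.sum_nonneg (fun u (_ : u ∈ Finset.univ) =>
                add_nonneg (hHnn u) (hCnn u))]
      calc -B ≤ _ := hglobal
        _ ≤ _ := Finset.sum_le_sum fun u _ => hbound u
    calc (2 : ℝ) ^ (-B) ≤ (2 : ℝ) ^ (Real.logb 2 (∏ i, lam (w i) (k i))) :=
          (Real.rpow_le_rpow_left_iff one_lt_two).mpr hlog
      _ = ∏ i, lam (w i) (k i) := Real.rpow_logb two_pos (by norm_num) hqpos
  -- counting
  have hsumall : ∑ k : Fin n → Fin d, ∏ i, lam (w i) (k i) = 1 := by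
    rw [← Fintype.prod_sum]
    simp [hsum1]
  have hcard : (S.card : ℝ) * (2 : ℝ) ^ (-B) ≤ 1 := by
    calc (S.card : ℝ) * (2 : ℝ) ^ (-B) = S.card • (2 : ℝ) ^ (-B) := (nsmul_eq_mul _ _).symm
      _ ≤ ∑ k ∈ S, ∏ i, lam (w i) (k i) := Finset.card_nsmul_le_sum S _ _ key
      _ ≤ ∑ k : Fin n → Fin d, ∏ i, lam (w i) (k i) :=
          Finset.sum_le_sum_of_subset_of_nonneg (Finset.subset_univ S)
            (fun k _ _ => (Finset.prod_pos fun i _ => hlam _ _).le)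
      _ = 1 := hsumall
  have h2B : (0 : ℝ) < (2 : ℝ) ^ B := Real.rpow_pos_of_pos two_pos _
  have hfinal : (S.card : ℝ) ≤ (2 : ℝ) ^ B := by
    rw [Real.rpow_neg (by norm_num)] at hcard
    rw [← div_le_one h2B] at *
    rwa [div_eq_mul_inv]
  rw [htr]
  simpa using hfinal
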